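/- arXiv:2510.01911 — 2 statements merged into one kernel-verified Lean document; each statement's English description precedes it below -/
import Mathlib

section
/- For every x ∈ D and each i ∈ {1,2}, ∫_{∂D} ln|x − y| · y_i dσ(y) = −πR x_i. -/
/-!
The parametrisation `θ ↦ R e^{iθ}` of the circle is `R`-Lipschitz and, on arcs of angle at most
`δ`, antilipschitz with constant `(R (1 - δ²))⁻¹`. Hence the push-forward of `μH[1]` on the circle
under `arg` is at most `R dθ` on `(-π, π]`, while cutting the circle into `n` equal arcs shows that
its total mass is at least `2πR (1 - (2π/n)²)` for every `n`; so it is exactly `R dθ`, and the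
integral over the circle is `2πR` times the circle average.

On the circle `|w| = R` one has `log ‖z - w‖ = Re g(w)` with `g(w) = log (R - z̄ w / R)`, which is
holomorphic near the closed disc when `‖z‖ < R`. For such `g`, writing
`Re g · w = (g · w + conj (g · w̄)) / 2` and `g(w) w̄ = g(0) w̄ + R² (dslope g 0 w)`, the mean value
property gives `avg (Re g(w) · w) = R² / 2 · conj (g'(0))`. Here `g'(0) = -z̄ / R²`, so the average
is `-z / 2`; identifying `ℝ²` with `ℂ` and taking coordinates gives the theorem.
-/

open MeasureTheory Metric Real Complex ComplexConjugate Set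
open scoped ENNReal NNReal

theorem dist_circleMap_circleMap (c : ℂ) (R s t : ℝ) :
    dist (circleMap c R s) (circleMap c R t) = |R| * |2 * Real.sin ((s - t) / 2)| := by
  have h : circleMap c R s - circleMap c R t = R * exp (t * I) * (exp (I * ↑(s - t)) - 1) := by
    simp only [circleMap, mul_sub, mul_one, mul_assoc, ← Complex.exp_add]
    push_cast
    ring_nf
  rw [Complex.dist_eq, h, norm_mul, norm_mul, norm_exp_ofReal_mul_I, norm_real,
    norm_exp_I_mul_ofReal_sub_one, Real.norm_eq_abs, Real.norm_eq_abs, mul_one]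

theorem mul_abs_sub_le_dist_circleMap (c : ℂ) (R : ℝ) {s t δ : ℝ} (hst : |s - t| ≤ δ) :
    |R| * (1 - δ ^ 2) * |s - t| ≤ dist (circleMap c R s) (circleMap c R t) := by
  rw [dist_circleMap_circleMap, mul_assoc]
  refine mul_le_mul_of_nonneg_left ?_ (abs_nonneg R)
  have hsin := Real.abs_sub_sin_le ((s - t) / 2)
  have hcube : |s - t| ^ 3 ≤ δ ^ 2 * |s - t| := by
    have := pow_le_pow_left₀ (abs_nonneg (s - t)) hst 2
    nlinarith [abs_nonneg (s - t)]
  have := abs_sub_abs_le_abs_sub ((s - t) / 2) (Real.sin ((s - t) / 2))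
  rw [abs_div, abs_two] at hsin this
  rw [abs_mul, abs_two]
  nlinarith [mul_nonneg (sq_nonneg δ) (abs_nonneg (s - t))]

theorem hausdorffMeasure_circleMap_image_le (c : ℂ) (R : ℝ) (s : Set ℝ) :
    μH[1] (circleMap c R '' s) ≤ ENNReal.ofReal |R| * volume s := by
  simpa [hausdorffMeasure_real, ENNReal.ofReal, Real.toNNReal_abs] using
    (lipschitzWith_circleMap c R).hausdorffMeasure_image_le zero_le_one s

theorem le_hausdorffMeasure_image_of_antilipschitzWith_domRestrict {X Y : Type*}
    [EMetricSpace X] [MeasurableSpace X] [BorelSpace X] [EMetricSpace Y] [MeasurableSpace Y]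
    [BorelSpace Y] {f : X → Y} {s : Set X} {K : ℝ≥0} {d : ℝ}
    (hf : AntilipschitzWith K (s.domRestrict f)) (hd : 0 ≤ d) :
    μH[d] s ≤ (K : ℝ≥0∞) ^ d * μH[d] (f '' s) := by
  have h := hf.le_hausdorffMeasure_image hd univ
  rwa [← isometry_subtype_coe.hausdorffMeasure_image (Or.inl hd), image_univ, image_univ,
    Subtype.range_coe, range_domRestrict] at h

theorem ofReal_le_hausdorffMeasure_circleMap_image_Ioc (c : ℂ) (R : ℝ) {a b δ : ℝ} (hab : a ≤ b)
    (hbδ : b - a ≤ δ) :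
    ENNReal.ofReal (|R| * (1 - δ ^ 2) * (b - a)) ≤ μH[1] (circleMap c R '' Ioc a b) := by
  set k := |R| * (1 - δ ^ 2)
  rcases le_or_gt k 0 with hk | hk
  · rw [ENNReal.ofReal_of_nonpos (mul_nonpos_of_nonpos_of_nonneg hk (sub_nonneg.2 hab))]
    exact zero_le
  have hanti : AntilipschitzWith (Real.toNNReal k⁻¹) ((Ioc a b).domRestrict (circleMap c R)) := by
    refine AntilipschitzWith.of_le_mul_dist fun s t ↦ ?_
    rw [Real.coe_toNNReal _ (inv_nonneg.2 hk.le), Subtype.dist_eq, le_inv_mul_iff₀ hk]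
    refine mul_abs_sub_le_dist_circleMap c R ?_
    rw [abs_sub_le_iff]
    constructor <;> linarith [s.2.1, s.2.2, t.2.1, t.2.2]
  have h := le_hausdorffMeasure_image_of_antilipschitzWith_domRestrict hanti zero_le_one
  rw [hausdorffMeasure_real, Real.volume_Ioc, ENNReal.rpow_one] at h
  calc ENNReal.ofReal (k * (b - a)) = ENNReal.ofReal k * ENNReal.ofReal (b - a) :=
        ENNReal.ofReal_mul hk.le
    _ ≤ ENNReal.ofReal k * (ENNReal.ofReal k⁻¹ * μH[1] (circleMap c R '' Ioc a b)) := by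
        gcongr; exact h
    _ = μH[1] (circleMap c R '' Ioc a b) := by
        rw [← mul_assoc, ← ENNReal.ofReal_mul hk.le, mul_inv_cancel₀ hk.ne', ENNReal.ofReal_one,
          one_mul]

theorem natCast_mul_le_measure_Ioc {μ : Measure ℝ} {a δ : ℝ} {m : ℝ≥0∞} (hδ : 0 ≤ δ) {n : ℕ}
    (h : ∀ k < n, m ≤ μ (Ioc (a + k * δ) (a + (k + 1) * δ))) :
    n * m ≤ μ (Ioc a (a + n * δ)) := by
  induction n with
  | zero => simp
  | succ n ih =>
    have hn : a ≤ a + n * δ := le_add_of_nonneg_right (by positivity)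
    have hunion : Ioc a (a + (n + 1 : ℕ) * δ) =
        Ioc a (a + n * δ) ∪ Ioc (a + n * δ) (a + (n + 1) * δ) := by
      rw [Ioc_union_Ioc_eq_Ioc hn (by nlinarith), Nat.cast_succ]
    rw [hunion, measure_union (Ioc_disjoint_Ioc_of_le le_rfl) measurableSet_Ioc, Nat.cast_succ,
      add_mul, one_mul]
    exact add_le_add (ih fun k hk ↦ h k (hk.trans n.lt_succ_self)) (h n n.lt_succ_self)

theorem sphere_inter_preimage_arg {R : ℝ} (hR : 0 < R) (s : Set ℝ) :
    sphere (0 : ℂ) R ∩ arg ⁻¹' s = circleMap 0 R '' (s ∩ Ioc (-π) π) := by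
  ext w
  constructor
  · rintro ⟨hw, hws⟩
    refine ⟨arg w, ⟨hws, arg_mem_Ioc w⟩, ?_⟩
    rw [circleMap_zero, ← mem_sphere_zero_iff_norm.1 hw]
    exact norm_mul_exp_arg_mul_I w
  · rintro ⟨θ, ⟨hθs, hθ⟩, rfl⟩
    refine ⟨circleMap_mem_sphere 0 hR.le θ, ?_⟩
    rwa [mem_preimage, circleMap_zero, arg_real_mul _ hR, arg_exp_mul_I,
      toIocMod_eq_self _ |>.2 (by simpa [neg_add_eq_sub, two_mul] using hθ)]

theorem map_arg_restrict_sphere_hausdorffMeasure_apply {R : ℝ} (hR : 0 < R) {s : Set ℝ}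
    (hs : MeasurableSet s) :
    (μH[1].restrict (sphere (0 : ℂ) R)).map arg s = μH[1] (circleMap 0 R '' (s ∩ Ioc (-π) π)) := by
  rw [Measure.map_apply measurable_arg hs, Measure.restrict_apply (measurable_arg hs), inter_comm,
    sphere_inter_preimage_arg hR]

theorem ofReal_mul_le_hausdorffMeasure_sphere {R : ℝ} (hR : 0 < R) {n : ℕ} (hn : 0 < n) :
    ENNReal.ofReal (R * (1 - (2 * π / n) ^ 2) * (2 * π)) ≤ μH[1] (sphere (0 : ℂ) R) := by
  set δ := 2 * π / n
  have hδ : 0 ≤ δ := by positivity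
  have hnδ : n * δ = 2 * π := mul_div_cancel₀ _ (by positivity)
  calc ENNReal.ofReal (R * (1 - δ ^ 2) * (2 * π))
      = n * ENNReal.ofReal (R * (1 - δ ^ 2) * δ) := by
        rw [← ENNReal.ofReal_natCast, ← ENNReal.ofReal_mul n.cast_nonneg, ← hnδ]
        ring_nf
    _ ≤ (μH[1].restrict (sphere (0 : ℂ) R)).map arg (Ioc (-π) (-π + n * δ)) := by
        refine natCast_mul_le_measure_Ioc hδ fun k hk ↦ ?_
        have hk' : (k : ℝ) + 1 ≤ n := by exact_mod_cast hk
        have hsub : Ioc (-π + k * δ) (-π + (k + 1) * δ) ⊆ Ioc (-π) π :=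
          Ioc_subset_Ioc (by nlinarith) (by nlinarith)
        have h := ofReal_le_hausdorffMeasure_circleMap_image_Ioc 0 R
          (a := -π + k * δ) (b := -π + (k + 1) * δ) (δ := δ) (by nlinarith) (by linarith)
        rw [abs_of_pos hR, show -π + (k + 1) * δ - (-π + k * δ) = δ by ring] at h
        rwa [map_arg_restrict_sphere_hausdorffMeasure_apply hR measurableSet_Ioc,
          inter_eq_left.2 hsub]
    _ ≤ (μH[1].restrict (sphere (0 : ℂ) R)).map arg univ := measure_mono (subset_univ _)
    _ = μH[1] (sphere (0 : ℂ) R) := by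
        rw [Measure.map_apply measurable_arg MeasurableSet.univ, preimage_univ,
          Measure.restrict_apply_univ]

theorem ofReal_two_pi_mul_le_hausdorffMeasure_sphere {R : ℝ} (hR : 0 < R) :
    ENNReal.ofReal (2 * π * R) ≤ μH[1] (sphere (0 : ℂ) R) := by
  have hcont : Continuous fun d : ℝ ↦ ENNReal.ofReal (R * (1 - d ^ 2) * (2 * π)) :=
    ENNReal.continuous_ofReal.comp (by fun_prop)
  have h := le_of_tendsto ((hcont.tendsto 0).comp (tendsto_const_div_atTop_nhds_zero_nat (2 * π)))
    (Filter.eventually_gt_atTop 0 |>.mono fun n hn ↦ ofReal_mul_le_hausdorffMeasure_sphere hR hn)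
  rwa [show R * (1 - 0 ^ 2) * (2 * π) = 2 * π * R by ring] at h

theorem map_arg_restrict_sphere_hausdorffMeasure {R : ℝ} (hR : 0 < R) :
    (μH[1].restrict (sphere (0 : ℂ) R)).map arg =
      ENNReal.ofReal R • volume.restrict (Ioc (-π) π) := by
  have hle : (μH[1].restrict (sphere (0 : ℂ) R)).map arg ≤
      ENNReal.ofReal R • volume.restrict (Ioc (-π) π) := by
    refine Measure.le_iff.2 fun s hs ↦ ?_
    rw [map_arg_restrict_sphere_hausdorffMeasure_apply hR hs, Measure.smul_apply,
      Measure.restrict_apply hs, smul_eq_mul]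
    simpa [abs_of_pos hR] using hausdorffMeasure_circleMap_image_le 0 R (s ∩ Ioc (-π) π)
  have : IsFiniteMeasure ((μH[1].restrict (sphere (0 : ℂ) R)).map arg) :=
    ⟨(hle univ).trans_lt (by simp [ENNReal.mul_lt_top])⟩
  refine Measure.eq_of_le_of_measure_univ_eq hle (le_antisymm (hle univ) ?_)
  rw [Measure.smul_apply, Measure.restrict_apply_univ, Real.volume_Ioc, smul_eq_mul,
    ← ENNReal.ofReal_mul hR.le, Measure.map_apply measurable_arg MeasurableSet.univ,
    preimage_univ, Measure.restrict_apply_univ, show R * (π - -π) = 2 * π * R by ring]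
  exact ofReal_two_pi_mul_le_hausdorffMeasure_sphere hR

theorem restrict_sphere_hausdorffMeasure_eq_map_circleMap {R : ℝ} (hR : 0 < R) :
    μH[1].restrict (sphere (0 : ℂ) R) =
      (ENNReal.ofReal R • volume.restrict (Ioc (-π) π)).map (circleMap 0 R) := by
  have hinv : circleMap 0 R ∘ arg =ᵐ[μH[1].restrict (sphere (0 : ℂ) R)] id := by
    filter_upwards [ae_restrict_mem isClosed_sphere.measurableSet] with w hw
    rw [Function.comp_apply, circleMap_zero, ← mem_sphere_zero_iff_norm.1 hw]
    exact norm_mul_exp_arg_mul_I w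
  rw [← map_arg_restrict_sphere_hausdorffMeasure hR,
    Measure.map_map (continuous_circleMap 0 R).measurable measurable_arg, Measure.map_congr hinv,
    Measure.map_id]

theorem integral_sphere_hausdorffMeasure_eq_circleAverage {E : Type*} [NormedAddCommGroup E]
    [NormedSpace ℝ E] {R : ℝ} (hR : 0 < R) {f : ℂ → E}
    (hf : AEStronglyMeasurable f (μH[1].restrict (sphere (0 : ℂ) R))) :
    ∫ w in sphere (0 : ℂ) R, f w ∂μH[1] = (2 * π * R) • circleAverage f 0 R := by
  rw [restrict_sphere_hausdorffMeasure_eq_map_circleMap hR] at hf ⊢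
  rw [integral_map (continuous_circleMap 0 R).aemeasurable hf, integral_smul_measure,
    ← intervalIntegral.integral_of_le (by linarith [pi_pos]), circleAverage_def, smul_smul,
    ENNReal.toReal_ofReal hR.le]
  have hper : Function.Periodic (fun θ ↦ f (circleMap 0 R θ)) (2 * π) :=
    fun θ ↦ by simp only [periodic_circleMap 0 R θ]
  have hshift := hper.intervalIntegral_add_eq (-π) 0
  rw [show -π + 2 * π = π by ring, zero_add] at hshift
  rw [hshift]
  congr 1
  field_simp

theorem circleAverage_sub_center (c : ℂ) (R : ℝ) :
    circleAverage (fun w ↦ w - c) c R = 0 := by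
  simpa using ((differentiable_id.sub_const c).diffContOnCl (s := ball c |R|)).circleAverage

theorem circleAverage_conj_sub_center (c : ℂ) (R : ℝ) :
    circleAverage (fun w ↦ conj (w - c)) c R = 0 := by
  have h := conjCLE.toContinuousLinearMap.circleAverage_comp_comm
    (f := fun w : ℂ ↦ w - c) (c := c) (R := R)
    ((continuous_id.sub continuous_const).continuousOn.circleIntegrable')
  simpa [Function.comp_def, circleAverage_sub_center] using h

section

variable {f : ℂ → ℂ} {c : ℂ} {R : ℝ}

theorem DiffContOnCl.dslope_ball {r : ℝ} (hf : DiffContOnCl ℂ f (ball c r)) (hr : 0 < r) :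
    DiffContOnCl ℂ (dslope f c) (ball c r) := by
  refine ⟨(Complex.differentiableOn_dslope (ball_mem_nhds c hr)).2 hf.differentiableOn,
    fun w hw ↦ ?_⟩
  rcases eq_or_ne w c with rfl | hwc
  · exact (continuousAt_dslope_same.2
      (hf.differentiableAt isOpen_ball (mem_ball_self hr))).continuousWithinAt
  · exact (continuousWithinAt_dslope_of_ne hwc).2 (hf.continuousOn w hw)

theorem DiffContOnCl.continuousOn_sphere {r : ℝ} (hf : DiffContOnCl ℂ f (ball c r)) :
    ContinuousOn f (sphere c r) :=
  hf.continuousOn_ball.mono sphere_subset_closedBall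

theorem DiffContOnCl.circleAverage_mul_conj_sub_center (hf : DiffContOnCl ℂ f (ball c |R|)) :
    Real.circleAverage (fun w ↦ f w * conj (w - c)) c R = R ^ 2 * deriv f c := by
  rcases eq_or_ne R 0 with rfl | hR
  · simp
  have hsphere : EqOn (fun w ↦ f w * conj (w - c))
      (fun w ↦ f c • conj (w - c) + ((R ^ 2 : ℝ) : ℂ) • dslope f c w) (sphere c |R|) := by
    intro w hw
    have hnorm : conj (w - c) * (w - c) = ((R ^ 2 : ℝ) : ℂ) := by
      rw [mul_comm, mul_conj, normSq_eq_norm_sq, ← Complex.dist_eq, mem_sphere.1 hw, sq_abs]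
    simp only [smul_eq_mul, ← hnorm]
    linear_combination conj (w - c) * (sub_smul_dslope f c w).symm
  have hslope := hf.dslope_ball (abs_pos.2 hR)
  rw [circleAverage_congr_sphere hsphere, circleAverage_fun_add, circleAverage_fun_smul,
    circleAverage_fun_smul, circleAverage_conj_sub_center, hslope.circleAverage, dslope_same]
  · simp
  · exact (by fun_prop : Continuous fun w : ℂ ↦ conj (w - c)).continuousOn.circleIntegrable'
      |>.const_fun_smul
  · exact hslope.continuousOn_sphere.circleIntegrable'.const_fun_smul

theorem DiffContOnCl.circleAverage_re_smul_sub_center (hf : DiffContOnCl ℂ f (ball c |R|)) :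
    Real.circleAverage (fun w ↦ (f w).re • (w - c)) c R = R ^ 2 / 2 * conj (deriv f c) := by
  have hsplit : (fun w ↦ (f w).re • (w - c)) =
      fun w ↦ (1 / 2 : ℂ) • (f w * (w - c)) + (1 / 2 : ℂ) • conj (f w * conj (w - c)) := by
    ext w
    rw [Complex.real_smul, re_eq_add_conj]
    simp only [smul_eq_mul, map_mul, conj_conj]
    ring
  have hholo : Real.circleAverage (fun w ↦ f w * (w - c)) c R = 0 := by
    simpa using (hf.smul (differentiable_id.sub_const c).diffContOnCl).circleAverage
  have hint : CircleIntegrable (fun w ↦ f w * conj (w - c)) c R :=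
    (hf.continuousOn_sphere.mul (by fun_prop)).circleIntegrable'
  have hconj := conjCLE.toContinuousLinearMap.circleAverage_comp_comm hint
  simp only [Function.comp_def, ContinuousLinearEquiv.coe_coe, conjCLE_apply] at hconj
  rw [hsplit, circleAverage_fun_add, circleAverage_fun_smul, circleAverage_fun_smul, hholo, hconj,
    hf.circleAverage_mul_conj_sub_center]
  · simp only [one_div, smul_eq_mul, mul_zero, map_mul, map_pow, conj_ofReal, zero_add]
    ring
  · exact (hf.continuousOn_sphere.mul (by fun_prop)).circleIntegrable'.const_fun_smul
  · exact (continuous_conj.comp_continuousOn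
      (hf.continuousOn_sphere.mul (by fun_prop))).circleIntegrable'.const_fun_smul

theorem ofReal_sub_conj_mul_div_mem_slitPlane {z w : ℂ} (hz : ‖z‖ < R) (hw : ‖w‖ ≤ R) :
    (R - conj z * w / R : ℂ) ∈ slitPlane := by
  have hR : 0 < R := (norm_nonneg z).trans_lt hz
  have hre : (conj z * w).re < R * R := (re_le_norm _).trans_lt <| by
    simpa using mul_lt_mul_of_lt_of_le_of_nonneg_of_pos hz hw (norm_nonneg _) hR
  refine Or.inl ?_
  rw [sub_re, ofReal_re, div_ofReal_re, sub_pos, div_lt_iff₀ hR]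
  exact hre

theorem norm_ofReal_sub_conj_mul_div {z w : ℂ} (hR : R ≠ 0) (hw : ‖w‖ = R) :
    ‖(R - conj z * w / R : ℂ)‖ = ‖z - w‖ := by
  have hR0 : (R : ℂ) ≠ 0 := ofReal_ne_zero.2 hR
  have hwc : w * conj w = (R : ℂ) ^ 2 := by rw [mul_conj, normSq_eq_norm_sq, hw]; push_cast; ring
  have h : (R - conj z * w / R : ℂ) = w * conj (w - z) / R := by
    rw [map_sub, mul_sub, hwc]
    field_simp
  have hRpos : 0 < R := (hw ▸ norm_nonneg w).lt_of_ne' hR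
  rw [h, norm_div, norm_mul, norm_conj, hw, norm_real, Real.norm_eq_abs, abs_of_pos hRpos,
    norm_sub_rev w z, mul_div_cancel_left₀ _ hR]

theorem circleAverage_log_norm_sub_smul {z : ℂ} (hz : ‖z‖ < R) :
    circleAverage (fun w ↦ Real.log ‖z - w‖ • w) 0 R = -(z / 2) := by
  have hR : 0 < R := (norm_nonneg z).trans_lt hz
  set g : ℂ → ℂ := fun w ↦ R - conj z * w / R with hg
  have hslit : ∀ w ∈ closedBall (0 : ℂ) R, g w ∈ slitPlane := fun w hw ↦
    ofReal_sub_conj_mul_div_mem_slitPlane hz (mem_closedBall_zero_iff.1 hw)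
  have hdiff : DiffContOnCl ℂ (fun w ↦ log (g w)) (ball 0 |R|) := by
    refine DifferentiableOn.diffContOnCl fun w hw ↦ ?_
    rw [abs_of_pos hR, closure_ball _ hR.ne'] at hw
    exact (((by fun_prop : Differentiable ℂ g) w).clog (hslit w hw)).differentiableWithinAt
  have hderiv : deriv (fun w ↦ log (g w)) 0 = -conj z / R ^ 2 := by
    have hg' : HasDerivAt g (-(conj z / R)) 0 := by
      simpa using
        ((hasDerivAt_id (0 : ℂ)).const_mul (conj z)).div_const (R : ℂ) |>.const_sub (R : ℂ)
    rw [(hg'.clog (hslit 0 (mem_closedBall_self hR.le))).deriv]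
    simp only [hg, mul_zero, zero_div, sub_zero]
    ring
  have hre : EqOn (fun w ↦ Real.log ‖z - w‖ • w) (fun w ↦ (log (g w)).re • (w - 0))
      (sphere 0 |R|) := fun w hw ↦ by
    dsimp only
    rw [log_re, sub_zero, norm_ofReal_sub_conj_mul_div hR.ne' (by simpa [abs_of_pos hR] using hw)]
  rw [circleAverage_congr_sphere hre, hdiff.circleAverage_re_smul_sub_center, hderiv]
  have hR0 : (R : ℂ) ≠ 0 := ofReal_ne_zero.2 hR.ne'
  simp only [map_div₀, map_neg, RingHomCompTriple.comp_apply, RingHom.id_apply, map_pow,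
    conj_ofReal]
  field_simp

theorem circleIntegrable_log_norm_sub_smul {z : ℂ} (hz : ‖z‖ < R) :
    CircleIntegrable (fun w ↦ Real.log ‖z - w‖ • w) 0 R := by
  refine ContinuousOn.circleIntegrable' <| ContinuousOn.smul
    ((continuousOn_const.sub continuousOn_id).norm.log fun w hw ↦ ?_) continuousOn_id
  rw [mem_sphere_zero_iff_norm, abs_of_pos ((norm_nonneg z).trans_lt hz)] at hw
  exact norm_ne_zero_iff.2 (sub_ne_zero.2 (ne_of_apply_ne norm (hz.trans_eq hw.symm).ne))

theorem integral_sphere_log_norm_sub_mul {z : ℂ} (hz : ‖z‖ < R) (L : ℂ →L[ℝ] ℝ) :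
    ∫ w in sphere (0 : ℂ) R, Real.log ‖z - w‖ * L w ∂μH[1] = -(π * R * L z) := by
  have hsmul : (fun w ↦ Real.log ‖z - w‖ * L w) = L ∘ fun w ↦ Real.log ‖z - w‖ • w := by
    ext w
    rw [Function.comp_apply, L.map_smul, smul_eq_mul]
  rw [integral_sphere_hausdorffMeasure_eq_circleAverage ((norm_nonneg z).trans_lt hz) (by fun_prop),
    hsmul, L.circleAverage_comp_comm (circleIntegrable_log_norm_sub_smul hz),
    circleAverage_log_norm_sub_smul hz,
    show -(z / 2) = (-2⁻¹ : ℝ) • z by simp [div_eq_inv_mul, Complex.real_smul], L.map_smul,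
    smul_eq_mul, smul_eq_mul]
  ring

end

theorem IsometryEquiv.setIntegral_sphere_hausdorffMeasure {X Y E : Type*} [MetricSpace X]
    [MeasurableSpace X] [BorelSpace X] [MetricSpace Y] [MeasurableSpace Y] [BorelSpace Y]
    [NormedAddCommGroup E] [NormedSpace ℝ E] (e : X ≃ᵢ Y) (x : X) (r d : ℝ) (f : Y → E) :
    ∫ y in sphere (e x) r, f y ∂μH[d] = ∫ x' in sphere x r, f (e x') ∂μH[d] := by
  rw [← (e.measurePreserving_hausdorffMeasure d).setIntegral_preimage_emb
    e.toHomeomorph.measurableEmbedding, e.preimage_sphere, e.symm_apply_apply]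

theorem disk_log_moment_integral_general (R : ℝ)
    (x : EuclideanSpace ℝ (Fin 2))
    (hx : x ∈ Metric.ball (0 : EuclideanSpace ℝ (Fin 2)) R) (i : Fin 2) :
    ∫ y in Metric.sphere (0 : EuclideanSpace ℝ (Fin 2)) R,
        Real.log ‖x - y‖ * y i ∂μH[1]
      = -(Real.pi * R * x i) := by
  set e := Complex.orthonormalBasisOneI.repr
  have hx' : ‖e.symm x‖ < R := by simpa using hx
  set L : ℂ →L[ℝ] ℝ := (EuclideanSpace.proj i).comp e.toContinuousLinearEquiv.toContinuousLinearMap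
  calc ∫ y in sphere 0 R, Real.log ‖x - y‖ * y i ∂μH[1]
      = ∫ w in sphere (0 : ℂ) R, Real.log ‖e.symm x - w‖ * L w ∂μH[1] := by
        rw [show (0 : EuclideanSpace ℝ (Fin 2)) = e.toIsometryEquiv 0 from (map_zero e).symm,
          IsometryEquiv.setIntegral_sphere_hausdorffMeasure]
        congr with w
        rw [LinearIsometryEquiv.coe_toIsometryEquiv, ← e.norm_map, map_sub, e.apply_symm_apply]
        rfl
    _ = -(π * R * x i) := by
        rw [integral_sphere_log_norm_sub_mul hx' L]
        simp [L]

/-- For every `x` in the open disk of radius `R` in `ℝ²` and each coordinate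
index `i`, the integral of `ln |x - y| · y_i` over the boundary circle (with
respect to the one-dimensional Hausdorff/arclength measure) equals `-π R x_i`. -/
theorem disk_log_moment_integral (R : ℝ) (hR : 0 < R)
    (x : EuclideanSpace ℝ (Fin 2))
    (hx : x ∈ Metric.ball (0 : EuclideanSpace ℝ (Fin 2)) R) (i : Fin 2) :
    ∫ y in Metric.sphere (0 : EuclideanSpace ℝ (Fin 2)) R,
        Real.log ‖x - y‖ * y i ∂μH[1]
      = -(Real.pi * R * x i) :=
  disk_log_moment_integral_general R x hx i
end

section
/- The 3×3 matrix Q = (Q_{ij})_{i,j=1}^{3} is diagonal: Q_{ij} = 0 whenever i ≠ j. Moreover Q₁₁ = Q₂₂. -/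
open MeasureTheory

/-- Partial derivative `∂f/∂y_l` of a scalar function on `ℝ²`. -/
noncomputable def pd (f : EuclideanSpace ℝ (Fin 2) → ℝ) (l : Fin 2)
    (y : EuclideanSpace ℝ (Fin 2)) : ℝ :=
  fderiv ℝ f y (EuclideanSpace.single l 1)

/-- The matrix-valued polynomial `A(x)` with entries
`a_{ij}(x) = δ_{ij}(−3|x|²/(32πμ²) − |x|²/(32π(λ+2μ)²)) − x_i x_j/(16π(λ+2μ)²) + x_i x_j/(16πμ²)`. -/
noncomputable def Amat (lam mu : ℝ) (x : EuclideanSpace ℝ (Fin 2)) :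
    Matrix (Fin 2) (Fin 2) ℝ := fun i j =>
  (if i = j then
      -3 * ‖x‖ ^ 2 / (32 * Real.pi * mu ^ 2)
        - ‖x‖ ^ 2 / (32 * Real.pi * (lam + 2 * mu) ^ 2)
    else 0)
    - x i * x j / (16 * Real.pi * (lam + 2 * mu) ^ 2)
    + x i * x j / (16 * Real.pi * mu ^ 2)

/-- The conormal-derivative kernel `N_A(x,y)`: its `j`-th column is the conormal
derivative, in the variable `y` with outward unit normal `ν(y) = y/R`, of the vector
field `y ↦ A(x−y)e_j`, i.e.
`N_A(x,y)e_j = λ div_y(A(x−y)e_j) ν(y) + μ (D_y(A(x−y)e_j) + D_y(A(x−y)e_j)ᵀ) ν(y)`. -/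
noncomputable def NAker (lam mu R : ℝ) (x y : EuclideanSpace ℝ (Fin 2)) :
    Matrix (Fin 2) (Fin 2) ℝ := fun i j =>
  lam * (∑ l : Fin 2, pd (fun z => Amat lam mu (x - z) l j) l y) * (y i / R)
    + mu * (∑ l : Fin 2,
        (pd (fun z => Amat lam mu (x - z) i j) l y
          + pd (fun z => Amat lam mu (x - z) l j) i y) * (y l / R))

/-- The boundary densities `f⁽¹⁾ = (2πR)^{-1/2}(1,0)`, `f⁽²⁾ = (2πR)^{-1/2}(0,1)`,
`f⁽³⁾ = (2πR³)^{-1/2}(x₂, −x₁)`. -/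
noncomputable def fB (R : ℝ) (i : Fin 3) (x : EuclideanSpace ℝ (Fin 2)) : Fin 2 → ℝ :=
  ![![1 / Real.sqrt (2 * Real.pi * R), 0],
    ![0, 1 / Real.sqrt (2 * Real.pi * R)],
    ![x 1 / Real.sqrt (2 * Real.pi * R ^ 3), -(x 0 / Real.sqrt (2 * Real.pi * R ^ 3))]] i

/-- The matrix `Q_{ij} = ∫_{∂D}∫_{∂D} f⁽ⁱ⁾(x) · (N_A(x,y) f⁽ʲ⁾(y)) dσ(y) dσ(x)`. -/
noncomputable def Qmat (lam mu R : ℝ) (i j : Fin 3) : ℝ :=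
  ∫ x in Metric.sphere (0 : EuclideanSpace ℝ (Fin 2)) R,
    (∫ y in Metric.sphere (0 : EuclideanSpace ℝ (Fin 2)) R,
      ∑ a : Fin 2, fB R i x a * ((NAker lam mu R x y).mulVec (fB R j y)) a
        ∂μH[1]) ∂μH[1]

/-!
`A(w) = α |w|² I + β w wᵀ` is isotropic, so the kernel is equivariant under orthogonal maps:
`N_A(Ox, Oy) = O N_A(x, y) Oᵀ`. Arclength on `∂D` is `O`-invariant, so whenever
`Oᵀ f⁽ⁱ⁾(Ox) = sᵢ f^(τ i)(x)` with signs `sᵢ`, we get `Q_{ij} = sᵢ sⱼ Q_{τ i, τ j}`. The point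
reflection (signs `(1, 1, -1)`) kills `Q_{i3}` and `Q_{3i}`, the reflection `x₂ ↦ -x₂`
(signs `(1, -1, -1)`) kills `Q₁₂` and `Q₂₁`, and the swap `x₁ ↔ x₂` exchanges `f⁽¹⁾` and `f⁽²⁾`.
-/

open Metric Matrix

local notation "ℝ²" => EuclideanSpace ℝ (Fin 2)

theorem setIntegral_sphere_comp_linearIsometryEquiv {E F : Type*} [NormedAddCommGroup E]
    [NormedSpace ℝ E] [MeasurableSpace E] [BorelSpace E] [NormedAddCommGroup F] [NormedSpace ℝ F]
    (d r : ℝ) (e : E ≃ₗᵢ[ℝ] E) (f : E → F) :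
    ∫ x in sphere 0 r, f (e x) ∂μH[d] = ∫ x in sphere 0 r, f x ∂μH[d] := by
  have hpre : e ⁻¹' sphere 0 r = sphere 0 r := by ext; simp
  simpa [hpre] using
    (e.toIsometryEquiv.measurePreserving_hausdorffMeasure d).setIntegral_preimage_emb
      e.toHomeomorph.measurableEmbedding f (sphere 0 r)

theorem setIntegral_sphere_sphere_comp_linearIsometryEquiv {E F : Type*} [NormedAddCommGroup E]
    [NormedSpace ℝ E] [MeasurableSpace E] [BorelSpace E] [NormedAddCommGroup F] [NormedSpace ℝ F]
    (d r : ℝ) (e : E ≃ₗᵢ[ℝ] E) (f : E → E → F) :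
    ∫ x in sphere 0 r, ∫ y in sphere 0 r, f (e x) (e y) ∂μH[d] ∂μH[d] =
      ∫ x in sphere 0 r, ∫ y in sphere 0 r, f x y ∂μH[d] ∂μH[d] := by
  simp only [setIntegral_sphere_comp_linearIsometryEquiv d r e (f (e _)),
    setIntegral_sphere_comp_linearIsometryEquiv d r e fun x => ∫ y in sphere 0 r, f x y ∂μH[d]]

noncomputable def amatIso (lam mu : ℝ) : ℝ :=
  -3 / (32 * Real.pi * mu ^ 2) - 1 / (32 * Real.pi * (lam + 2 * mu) ^ 2)

noncomputable def amatDyad (lam mu : ℝ) : ℝ :=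
  1 / (16 * Real.pi * mu ^ 2) - 1 / (16 * Real.pi * (lam + 2 * mu) ^ 2)

lemma Amat_apply (lam mu : ℝ) (w : ℝ²) (i j : Fin 2) :
    Amat lam mu w i j = (if i = j then amatIso lam mu else 0) * ‖w‖ ^ 2
      + amatDyad lam mu * (w i * w j) := by
  simp only [Amat, amatIso, amatDyad]
  split <;> ring

lemma pd_Amat (lam mu : ℝ) (x y : ℝ²) (i j l : Fin 2) :
    pd (fun z => Amat lam mu (x - z) i j) l y =
      (if i = j then amatIso lam mu else 0) * (2 * (y l - x l))
      + amatDyad lam mu * ((if i = l then y j - x j else 0) + (if j = l then y i - x i else 0)) := by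
  have hw : HasFDerivAt (fun z : ℝ² => x - z) (-ContinuousLinearMap.id ℝ ℝ²) y :=
    (hasFDerivAt_id y).const_sub x
  have hcoord (k : Fin 2) := (EuclideanSpace.proj k).hasFDerivAt.comp y hw
  have hA := (hw.norm_sq.const_mul (if i = j then amatIso lam mu else 0)).add
    (((hcoord i).mul (hcoord j)).const_mul (amatDyad lam mu))
  simp only [pd, Amat_apply]
  refine (congrArg (· (EuclideanSpace.single l 1)) hA.fderiv).trans ?_
  fin_cases i <;> fin_cases j <;> fin_cases l <;> simp [PiLp.inner_apply] <;> ring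

noncomputable def reflectFirstAxis : ℝ² ≃ₗᵢ[ℝ] ℝ² :=
  LinearIsometryEquiv.piLpCongrRight 2
    (fun i : Fin 2 => if i = 1 then LinearIsometryEquiv.neg ℝ else LinearIsometryEquiv.refl ℝ ℝ)

noncomputable def swapCoords : ℝ² ≃ₗᵢ[ℝ] ℝ² :=
  LinearIsometryEquiv.piLpCongrLeft 2 ℝ ℝ (Equiv.swap 0 1)

@[simp] lemma reflectFirstAxis_apply_zero (x : ℝ²) : reflectFirstAxis x 0 = x 0 := rfl
@[simp] lemma reflectFirstAxis_apply_one (x : ℝ²) : reflectFirstAxis x 1 = -x 1 := rfl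
@[simp] lemma swapCoords_apply_zero (x : ℝ²) : swapCoords x 0 = x 1 := rfl
@[simp] lemma swapCoords_apply_one (x : ℝ²) : swapCoords x 1 = x 0 := rfl

lemma NAker_neg (lam mu R : ℝ) (x y : ℝ²) : NAker lam mu R (-x) (-y) = NAker lam mu R x y := by
  ext i j
  fin_cases i <;> fin_cases j <;> simp [NAker, pd_Amat, Fin.sum_univ_two] <;> ring

lemma NAker_reflectFirstAxis (lam mu R : ℝ) (x y : ℝ²) :
    NAker lam mu R (reflectFirstAxis x) (reflectFirstAxis y) =
      !![1, 0; 0, -1] * NAker lam mu R x y * !![1, 0; 0, -1]ᵀ := by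
  ext i j
  simp only [mul_apply, transpose_apply, NAker, pd_Amat, Fin.sum_univ_two,
    reflectFirstAxis_apply_zero, reflectFirstAxis_apply_one]
  fin_cases i <;> fin_cases j <;> simp [-mul_eq_mul_left_iff] <;> ring

lemma NAker_swapCoords (lam mu R : ℝ) (x y : ℝ²) :
    NAker lam mu R (swapCoords x) (swapCoords y) =
      !![0, 1; 1, 0] * NAker lam mu R x y * !![0, 1; 1, 0]ᵀ := by
  ext i j
  simp only [mul_apply, transpose_apply, NAker, pd_Amat, Fin.sum_univ_two,
    swapCoords_apply_zero, swapCoords_apply_one]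
  fin_cases i <;> fin_cases j <;> simp [-mul_eq_mul_left_iff] <;> ring

lemma fB_neg (R : ℝ) (i : Fin 3) (x : ℝ²) : fB R i (-x) = ![(1 : ℝ), 1, -1] i • fB R i x := by
  ext a
  fin_cases i <;> fin_cases a <;> simp [fB, neg_div]

lemma fB_reflectFirstAxis (R : ℝ) (i : Fin 3) (x : ℝ²) :
    !![1, 0; 0, -1]ᵀ *ᵥ fB R i (reflectFirstAxis x) = ![(1 : ℝ), -1, -1] i • fB R i x := by
  ext a
  fin_cases i <;> fin_cases a <;> simp [fB, mulVec, dotProduct, neg_div]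

lemma fB_swapCoords (R : ℝ) (i : Fin 3) (x : ℝ²) :
    !![0, 1; 1, 0]ᵀ *ᵥ fB R i (swapCoords x) = ![(1 : ℝ), 1, -1] i • fB R (![1, 0, 2] i) x := by
  ext a
  fin_cases i <;> fin_cases a <;> simp [fB, mulVec, dotProduct]

lemma Qmat_eq_integral_dotProduct (lam mu R : ℝ) (i j : Fin 3) :
    Qmat lam mu R i j = ∫ x in sphere (0 : ℝ²) R, ∫ y in sphere (0 : ℝ²) R,
      fB R i x ⬝ᵥ (NAker lam mu R x y *ᵥ fB R j y) ∂μH[1] ∂μH[1] := rfl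

lemma dotProduct_conj_mulVec {n : Type*} [Fintype n] (M N : Matrix n n ℝ) (v w : n → ℝ) :
    v ⬝ᵥ ((M * N * Mᵀ) *ᵥ w) = (Mᵀ *ᵥ v) ⬝ᵥ (N *ᵥ (Mᵀ *ᵥ w)) := by
  rw [← mulVec_mulVec, ← mulVec_mulVec, dotProduct_mulVec, mulVec_transpose M v]

lemma Qmat_eq_of_symmetry (lam mu R : ℝ) (e : ℝ² ≃ₗᵢ[ℝ] ℝ²) (M : Matrix (Fin 2) (Fin 2) ℝ)
    (τ : Fin 3 → Fin 3) (s : Fin 3 → ℝ)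
    (hN : ∀ x y, NAker lam mu R (e x) (e y) = M * NAker lam mu R x y * Mᵀ)
    (hf : ∀ i x, Mᵀ *ᵥ fB R i (e x) = s i • fB R (τ i) x) (i j : Fin 3) :
    Qmat lam mu R i j = s i * s j * Qmat lam mu R (τ i) (τ j) := by
  have hpt (x y : ℝ²) : fB R i (e x) ⬝ᵥ (NAker lam mu R (e x) (e y) *ᵥ fB R j (e y)) =
      s i * s j * (fB R (τ i) x ⬝ᵥ (NAker lam mu R x y *ᵥ fB R (τ j) y)) := by
    rw [hN, dotProduct_conj_mulVec, hf, hf, mulVec_smul, smul_dotProduct, dotProduct_smul,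
      smul_eq_mul, smul_eq_mul]
    ring
  calc Qmat lam mu R i j
      = ∫ x in sphere (0 : ℝ²) R, ∫ y in sphere (0 : ℝ²) R,
          fB R i (e x) ⬝ᵥ (NAker lam mu R (e x) (e y) *ᵥ fB R j (e y)) ∂μH[1] ∂μH[1] :=
        (setIntegral_sphere_sphere_comp_linearIsometryEquiv 1 R e
          fun x y => fB R i x ⬝ᵥ (NAker lam mu R x y *ᵥ fB R j y)).symm
    _ = s i * s j * Qmat lam mu R (τ i) (τ j) := by
        simp only [hpt, integral_const_mul, Qmat_eq_integral_dotProduct]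

theorem Qmat_diagonal_general (R lam mu : ℝ) :
    (∀ i j : Fin 3, i ≠ j → Qmat lam mu R i j = 0)
    ∧ Qmat lam mu R 0 0 = Qmat lam mu R 1 1 := by
  have hneg := Qmat_eq_of_symmetry lam mu R (LinearIsometryEquiv.neg ℝ) 1 id ![1, 1, -1]
    (fun x y => by simpa using NAker_neg lam mu R x y) (fun i x => by simpa using fB_neg R i x)
  have hrefl := Qmat_eq_of_symmetry lam mu R reflectFirstAxis _ id ![1, -1, -1]
    (NAker_reflectFirstAxis lam mu R) (fB_reflectFirstAxis R)
  have hswap := Qmat_eq_of_symmetry lam mu R swapCoords _ ![1, 0, 2] ![1, 1, -1]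
    (NAker_swapCoords lam mu R) (fB_swapCoords R)
  refine ⟨fun i j hij => ?_, by simpa using hswap 0 0⟩
  have h₁ := hneg i j
  have h₂ := hrefl i j
  fin_cases i <;> fin_cases j <;> first | exact absurd rfl hij | (norm_num at h₁ h₂ ⊢; linarith)

/-- The `3×3` matrix `Q` is diagonal (`Q_{ij} = 0` for `i ≠ j`), and `Q₁₁ = Q₂₂`. -/
theorem Qmat_diagonal (R lam mu : ℝ) (hR : 0 < R)
    (hmu : 0 < mu) (hlm : 0 < lam + mu) :
    (∀ i j : Fin 3, i ≠ j → Qmat lam mu R i j = 0)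
    ∧ Qmat lam mu R 0 0 = Qmat lam mu R 1 1 :=
  Qmat_diagonal_general R lam mu
end
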